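/- For the operator composition of kernels against Lebesgue measure, ((z̄'_i 𝒫) ∘ (z_j 𝒫))(Z,Z') = (1/π) δ_{ij} 𝒫(Z,Z') + z̄'_i z_j 𝒫(Z,Z'); that is, in the notation 𝒦[F,G], one has 𝒦[z̄'_i, z_j] = (1/π) δ_{ij} + z̄'_i z_j. -/

import Mathlib

/-
The product 𝒫(Z,W) 𝒫(W,Z') equals 𝒫(Z,Z') times ∏ₖ exp(-π (wₖ - zₖ) conj(wₖ - z'ₖ)),
a product of one-variable Gaussian weights of total mass 1 each. The integral over ℂⁿ
therefore factors coordinatewise, and only the first and second moments of one weight are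
needed: ∫ w = z, ∫ w̄ = z̄' and ∫ w̄ w = 1/π + z z̄'. Writing w = x + iy splits the weight
into two real Gaussians exp(b x² + c x) with complex linear coefficients, whose moments of
order 1 and 2 follow by integrating the derivatives of exp(b x² + c x) and x exp(b x² + c x)
over ℝ.
-/

open MeasureTheory Complex

/-- The model Bergman kernel on `ℂⁿ × ℂⁿ`. -/
noncomputable def Pker (n : ℕ) (z z' : Fin n → ℂ) : ℂ :=
  Complex.exp (-(Real.pi : ℂ)/2 *
    ∑ k, ((‖z k‖ : ℂ)^2 + (‖z' k‖ : ℂ)^2 - 2 * z k * (starRingEnd ℂ) (z' k)))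

open ComplexConjugate
open scoped Real

theorem abs_pow_le_exp_add_exp_neg (k : ℕ) (x : ℝ) :
    |x| ^ k ≤ Real.exp (k * x) + Real.exp (-k * x) :=
  calc |x| ^ k ≤ Real.exp |x| ^ k := by gcongr; linarith [Real.add_one_le_exp |x|]
    _ = Real.exp (k * |x|) := (Real.exp_nat_mul _ _).symm
    _ ≤ Real.exp (k * x) + Real.exp (-k * x) := by
      rcases abs_cases x with ⟨h, -⟩ | ⟨h, -⟩ <;> rw [h] <;> simp [(Real.exp_pos _).le]

theorem hasDerivAt_ofReal (x : ℝ) : HasDerivAt (fun y : ℝ ↦ (y : ℂ)) 1 x :=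
  ofRealCLM.hasDerivAt

theorem hasDerivAt_cexp_quadratic (b c : ℂ) (x : ℝ) :
    HasDerivAt (fun x : ℝ ↦ cexp (b * x ^ 2 + c * x))
      ((2 * b * x + c) * cexp (b * x ^ 2 + c * x)) x := by
  have : HasDerivAt (fun w : ℂ ↦ b * w ^ 2 + c * w) (2 * b * x + c) x := by
    refine (((hasDerivAt_pow 2 (x : ℂ)).const_mul b).add
      ((hasDerivAt_id (x : ℂ)).const_mul c)).congr_deriv ?_
    push_cast
    ring
  simpa [mul_comm] using this.cexp.comp_ofReal

section Quadratic

variable {b : ℂ}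

theorem integrable_pow_mul_cexp_quadratic (hb : b.re < 0) (k : ℕ) (c : ℂ) :
    Integrable fun x : ℝ ↦ (x : ℂ) ^ k * cexp (b * x ^ 2 + c * x) := by
  refine ((integrable_cexp_quadratic' hb (c + k) 0).norm.add
    (integrable_cexp_quadratic' hb (c + -k) 0).norm).mono' (by fun_prop) (.of_forall fun x ↦ ?_)
  have hre (e : ℂ) : (b * x ^ 2 + (c + e) * x + 0).re = (b * x ^ 2 + c * x).re + e.re * x := by
    simp only [add_re, mul_re, ← ofReal_pow, ofReal_re, ofReal_im, zero_re]
    ring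
  simp only [norm_mul, norm_pow, norm_real, Real.norm_eq_abs, norm_exp, Pi.add_apply, hre,
    Real.exp_add, neg_re, natCast_re]
  nlinarith [abs_pow_le_exp_add_exp_neg k x, Real.exp_pos (b * x ^ 2 + c * x).re]

theorem integral_mul_cexp_quadratic (hb : b.re < 0) (c : ℂ) :
    ∫ x : ℝ, (x : ℂ) * cexp (b * x ^ 2 + c * x)
      = -c / (2 * b) * ∫ x : ℝ, cexp (b * x ^ 2 + c * x) := by
  have hb0 : b ≠ 0 := by rintro rfl; simp at hb
  have h0 : Integrable fun x : ℝ ↦ cexp (b * x ^ 2 + c * x) := by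
    simpa using integrable_pow_mul_cexp_quadratic hb 0 c
  have h1 : Integrable fun x : ℝ ↦ (x : ℂ) * cexp (b * x ^ 2 + c * x) := by
    simpa using integrable_pow_mul_cexp_quadratic hb 1 c
  have hsplit (x : ℝ) : (2 * b * x + c) * cexp (b * x ^ 2 + c * x)
      = 2 * b * (x * cexp (b * x ^ 2 + c * x)) + c * cexp (b * x ^ 2 + c * x) := by
    ring
  have := integral_eq_zero_of_hasDerivAt_of_integrable (hasDerivAt_cexp_quadratic b c)
    (((h1.const_mul _).add (h0.const_mul _)).congr (.of_forall fun x ↦ (hsplit x).symm)) h0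
  rw [funext hsplit, integral_add (h1.const_mul _) (h0.const_mul _), integral_const_mul,
    integral_const_mul] at this
  rw [div_mul_eq_mul_div, eq_div_iff (by simpa using hb0)]
  linear_combination this

theorem integral_sq_mul_cexp_quadratic (hb : b.re < 0) (c : ℂ) :
    ∫ x : ℝ, (x : ℂ) ^ 2 * cexp (b * x ^ 2 + c * x)
      = (c ^ 2 / (4 * b ^ 2) - 1 / (2 * b)) * ∫ x : ℝ, cexp (b * x ^ 2 + c * x) := by
  have hb0 : b ≠ 0 := by rintro rfl; simp at hb
  have h0 : Integrable fun x : ℝ ↦ cexp (b * x ^ 2 + c * x) := by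
    simpa using integrable_pow_mul_cexp_quadratic hb 0 c
  have h1 : Integrable fun x : ℝ ↦ (x : ℂ) * cexp (b * x ^ 2 + c * x) := by
    simpa using integrable_pow_mul_cexp_quadratic hb 1 c
  have h2 := (integrable_pow_mul_cexp_quadratic hb 2 c).const_mul (2 * b)
  have h21 : Integrable fun x : ℝ ↦ 2 * b * ((x : ℂ) ^ 2 * cexp (b * x ^ 2 + c * x))
      + c * (x * cexp (b * x ^ 2 + c * x)) :=
    h2.add (h1.const_mul c)
  have hsplit (x : ℝ) :
      1 * cexp (b * x ^ 2 + c * x) + x * ((2 * b * x + c) * cexp (b * x ^ 2 + c * x))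
        = 2 * b * ((x : ℂ) ^ 2 * cexp (b * x ^ 2 + c * x))
          + c * (x * cexp (b * x ^ 2 + c * x)) + cexp (b * x ^ 2 + c * x) := by
    ring
  have := integral_eq_zero_of_hasDerivAt_of_integrable
    (fun x ↦ (hasDerivAt_ofReal x).mul (hasDerivAt_cexp_quadratic b c x))
    ((h21.add h0).congr (.of_forall fun x ↦ (hsplit x).symm)) h1
  rw [funext hsplit, integral_add h21 h0, integral_add h2 (h1.const_mul c), integral_const_mul,
    integral_const_mul, integral_mul_cexp_quadratic hb] at this
  set Z := ∫ x : ℝ, cexp (b * x ^ 2 + c * x)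
  set M := ∫ x : ℝ, (x : ℂ) ^ 2 * cexp (b * x ^ 2 + c * x)
  field_simp at this ⊢
  linear_combination 2 * this

end Quadratic

theorem integral_re_mul_im {𝕜 : Type*} [RCLike 𝕜] (f g : ℝ → 𝕜) :
    ∫ w : ℂ, f w.re * g w.im = (∫ x, f x) * ∫ y, g y := by
  rw [← integral_prod_mul, ← Measure.volume_eq_prod,
    ← volume_preserving_equiv_real_prod.integral_comp']
  rfl

theorem MeasureTheory.Integrable.re_mul_im {R : Type*} [NormedRing R] {f g : ℝ → R}
    (hf : Integrable f) (hg : Integrable g) : Integrable fun w : ℂ ↦ f w.re * g w.im :=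
  (volume_preserving_equiv_real_prod.integrable_comp_emb
    measurableEquivRealProd.measurableEmbedding).2 (hf.mul_prod hg)

noncomputable def cexpQuadratic (b u v w : ℂ) : ℂ :=
  cexp (b * (w * conj w) + u * conj w + v * w)

section CexpQuadratic

variable {b u v : ℂ}

theorem cexpQuadratic_eq_mul (w : ℂ) :
    cexpQuadratic b u v w
      = cexp (b * w.re ^ 2 + (u + v) * w.re) * cexp (b * w.im ^ 2 + I * (v - u) * w.im) := by
  rw [cexpQuadratic, ← exp_add]
  congr 1
  conv_lhs => rw [← re_add_im w]
  simp only [map_add, map_mul, conj_ofReal, conj_I]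
  linear_combination -b * w.im ^ 2 * I_sq

theorem integral_re_pow_mul_im_pow_mul_cexpQuadratic (k l : ℕ) :
    ∫ w, (w.re : ℂ) ^ k * (w.im : ℂ) ^ l * cexpQuadratic b u v w
      = (∫ x : ℝ, (x : ℂ) ^ k * cexp (b * x ^ 2 + (u + v) * x))
        * ∫ y : ℝ, (y : ℂ) ^ l * cexp (b * y ^ 2 + I * (v - u) * y) := by
  simp_rw [cexpQuadratic_eq_mul, ← integral_re_mul_im, mul_mul_mul_comm]

theorem integral_cexpQuadratic_eq_mul :
    ∫ w, cexpQuadratic b u v w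
      = (∫ x : ℝ, cexp (b * x ^ 2 + (u + v) * x))
        * ∫ y : ℝ, cexp (b * y ^ 2 + I * (v - u) * y) := by
  simpa using integral_re_pow_mul_im_pow_mul_cexpQuadratic (b := b) (u := u) (v := v) 0 0

theorem integrable_re_pow_mul_im_pow_mul_cexpQuadratic (hb : b.re < 0) (k l : ℕ) :
    Integrable fun w ↦ (w.re : ℂ) ^ k * (w.im : ℂ) ^ l * cexpQuadratic b u v w := by
  simpa only [cexpQuadratic_eq_mul, mul_mul_mul_comm] using
    (integrable_pow_mul_cexp_quadratic hb k _).re_mul_im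
      (integrable_pow_mul_cexp_quadratic hb l _)

theorem integral_cexpQuadratic (hb : b.re < 0) :
    ∫ w, cexpQuadratic b u v w = π / -b * cexp (-(u * v) / b) := by
  have hb0 : b ≠ 0 := by rintro rfl; simp at hb
  have h1d (c : ℂ) : ∫ x : ℝ, cexp (b * x ^ 2 + c * x)
      = (π / -b) ^ (1 / 2 : ℂ) * cexp (-(c ^ 2 / (4 * b))) := by
    simpa using integral_cexp_quadratic hb c 0
  rw [integral_cexpQuadratic_eq_mul, h1d, h1d, mul_mul_mul_comm, ← cpow_add _ _ (by simp [hb0]),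
    ← exp_add, add_halves, cpow_one]
  congr 2
  linear_combination (-(v - u) ^ 2 / (4 * b)) * I_sq

theorem integral_mul_cexpQuadratic (hb : b.re < 0) :
    ∫ w, w * cexpQuadratic b u v w = -(u / b) * ∫ w, cexpQuadratic b u v w := by
  have hw (w : ℂ) : w * cexpQuadratic b u v w
      = (w.re : ℂ) ^ 1 * (w.im : ℂ) ^ 0 * cexpQuadratic b u v w
        + I * ((w.re : ℂ) ^ 0 * (w.im : ℂ) ^ 1 * cexpQuadratic b u v w) := by
    nth_rewrite 1 [← re_add_im w]
    ring
  rw [funext hw, integral_add (integrable_re_pow_mul_im_pow_mul_cexpQuadratic hb 1 0)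
    ((integrable_re_pow_mul_im_pow_mul_cexpQuadratic hb 0 1).const_mul I), integral_const_mul,
    integral_re_pow_mul_im_pow_mul_cexpQuadratic, integral_re_pow_mul_im_pow_mul_cexpQuadratic,
    integral_cexpQuadratic_eq_mul]
  simp only [pow_zero, pow_one, one_mul, integral_mul_cexp_quadratic hb]
  set Z₁ := ∫ x : ℝ, cexp (b * x ^ 2 + (u + v) * x)
  set Z₂ := ∫ y : ℝ, cexp (b * y ^ 2 + I * (v - u) * y)
  linear_combination (Z₁ * Z₂ * (u - v) / (2 * b)) * I_sq

theorem integral_conj_mul_cexpQuadratic (hb : b.re < 0) :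
    ∫ w, conj w * cexpQuadratic b u v w = -(v / b) * ∫ w, cexpQuadratic b u v w := by
  have hw (w : ℂ) : conj w * cexpQuadratic b u v w
      = (w.re : ℂ) ^ 1 * (w.im : ℂ) ^ 0 * cexpQuadratic b u v w
        - I * ((w.re : ℂ) ^ 0 * (w.im : ℂ) ^ 1 * cexpQuadratic b u v w) := by
    nth_rewrite 1 [← re_add_im w]
    simp only [map_add, map_mul, conj_ofReal, conj_I]
    ring
  rw [funext hw, integral_sub (integrable_re_pow_mul_im_pow_mul_cexpQuadratic hb 1 0)
    ((integrable_re_pow_mul_im_pow_mul_cexpQuadratic hb 0 1).const_mul I), integral_const_mul,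
    integral_re_pow_mul_im_pow_mul_cexpQuadratic, integral_re_pow_mul_im_pow_mul_cexpQuadratic,
    integral_cexpQuadratic_eq_mul]
  simp only [pow_zero, pow_one, one_mul, integral_mul_cexp_quadratic hb]
  set Z₁ := ∫ x : ℝ, cexp (b * x ^ 2 + (u + v) * x)
  set Z₂ := ∫ y : ℝ, cexp (b * y ^ 2 + I * (v - u) * y)
  linear_combination (Z₁ * Z₂ * (v - u) / (2 * b)) * I_sq

theorem integral_conj_mul_self_mul_cexpQuadratic (hb : b.re < 0) :
    ∫ w, conj w * w * cexpQuadratic b u v w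
      = (u * v / b ^ 2 - 1 / b) * ∫ w, cexpQuadratic b u v w := by
  have hw (w : ℂ) : conj w * w * cexpQuadratic b u v w
      = (w.re : ℂ) ^ 2 * (w.im : ℂ) ^ 0 * cexpQuadratic b u v w
        + (w.re : ℂ) ^ 0 * (w.im : ℂ) ^ 2 * cexpQuadratic b u v w := by
    rw [conj_mul', ← ofReal_pow, Complex.sq_norm, normSq_apply]
    push_cast
    ring
  rw [funext hw, integral_add (integrable_re_pow_mul_im_pow_mul_cexpQuadratic hb 2 0)
    (integrable_re_pow_mul_im_pow_mul_cexpQuadratic hb 0 2),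
    integral_re_pow_mul_im_pow_mul_cexpQuadratic, integral_re_pow_mul_im_pow_mul_cexpQuadratic,
    integral_cexpQuadratic_eq_mul]
  simp only [pow_zero, one_mul, integral_sq_mul_cexp_quadratic hb]
  set Z₁ := ∫ x : ℝ, cexp (b * x ^ 2 + (u + v) * x)
  set Z₂ := ∫ y : ℝ, cexp (b * y ^ 2 + I * (v - u) * y)
  linear_combination (Z₁ * Z₂ * (v - u) ^ 2 / (4 * b ^ 2)) * I_sq

end CexpQuadratic

noncomputable def bergmanWeight (z z' w : ℂ) : ℂ := cexp (-π * ((w - z) * conj (w - z')))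

section BergmanWeight

variable (z z' : ℂ)

theorem bergmanWeight_eq (w : ℂ) :
    bergmanWeight z z' w
      = cexp (-π * z * conj z') * cexpQuadratic (-π) (π * z) (π * conj z') w := by
  rw [bergmanWeight, cexpQuadratic, ← exp_add, map_sub]
  congr 1
  ring

theorem re_neg_pi_lt_zero : (-π : ℂ).re < 0 := by simp [Real.pi_pos]

theorem integral_bergmanWeight : ∫ w, bergmanWeight z z' w = 1 := by
  simp_rw [bergmanWeight_eq]
  rw [integral_const_mul, integral_cexpQuadratic re_neg_pi_lt_zero, neg_neg,
    div_self (ofReal_ne_zero.2 Real.pi_ne_zero), one_mul, ← exp_add, ← exp_zero]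
  congr 1
  field_simp
  ring

theorem integral_mul_bergmanWeight_of_eq {f : ℂ → ℂ} {c : ℂ}
    (h : ∫ w, f w * cexpQuadratic (-π) (π * z) (π * conj z') w
      = c * ∫ w, cexpQuadratic (-π) (π * z) (π * conj z') w) :
    ∫ w, f w * bergmanWeight z z' w = c := by
  have h1 := integral_bergmanWeight z z'
  simp_rw [bergmanWeight_eq, mul_left_comm (f _), integral_const_mul] at h1 ⊢
  rw [h, mul_left_comm, h1, mul_one]

theorem integral_mul_bergmanWeight : ∫ w, w * bergmanWeight z z' w = z :=
  integral_mul_bergmanWeight_of_eq z z' <| by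
    rw [integral_mul_cexpQuadratic re_neg_pi_lt_zero]
    field_simp

theorem integral_conj_mul_bergmanWeight : ∫ w, conj w * bergmanWeight z z' w = conj z' :=
  integral_mul_bergmanWeight_of_eq z z' <| by
    rw [integral_conj_mul_cexpQuadratic re_neg_pi_lt_zero]
    field_simp

theorem integral_conj_mul_self_mul_bergmanWeight :
    ∫ w, conj w * w * bergmanWeight z z' w = 1 / π + z * conj z' :=
  integral_mul_bergmanWeight_of_eq z z' (f := fun w ↦ conj w * w) <| by
    rw [integral_conj_mul_self_mul_cexpQuadratic re_neg_pi_lt_zero]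
    congr 1
    field_simp
    ring

end BergmanWeight

theorem integral_mul_mul_prod_of_integral_eq_one {ι E 𝕜 : Type*} [Fintype ι] [DecidableEq ι]
    [MeasureSpace E] [SigmaFinite (volume : Measure E)] [RCLike 𝕜] {g : ι → E → 𝕜}
    (hg : ∀ k, ∫ x, g k x = 1) (f₁ f₂ : E → 𝕜) (i j : ι) :
    ∫ w : ι → E, f₁ (w i) * f₂ (w j) * ∏ k, g k (w k)
      = if i = j then ∫ x, f₁ x * f₂ x * g i x
        else (∫ x, f₁ x * g i x) * ∫ x, f₂ x * g j x := by
  let F (k : ι) (x : E) : 𝕜 :=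
    (if k = i then f₁ x else 1) * (if k = j then f₂ x else 1) * g k x
  have hF (w : ι → E) : f₁ (w i) * f₂ (w j) * ∏ k, g k (w k) = ∏ k, F k (w k) := by
    simp only [F, Finset.prod_mul_distrib, Fintype.prod_ite_eq']
  have hF1 {k : ι} (hi : k ≠ i) (hj : k ≠ j) : ∫ x, F k x = 1 := by simp [F, hi, hj, hg]
  rw [funext hF, volume_pi, integral_fintype_prod_eq_prod]
  split_ifs with hij
  · subst hij
    rw [Finset.prod_eq_single i (fun k _ hk ↦ hF1 hk hk) (by simp)]
    simp [F]
  · rw [Finset.prod_eq_mul i j hij (fun k _ hk ↦ hF1 hk.1 hk.2) (by simp) (by simp)]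
    simp [F, hij, Ne.symm hij]

theorem Pker_mul_Pker (n : ℕ) (z w z' : Fin n → ℂ) :
    Pker n z w * Pker n w z' = Pker n z z' * ∏ k, bergmanWeight (z k) (z' k) (w k) := by
  simp only [Pker, bergmanWeight, ← exp_add, ← exp_sum, Finset.mul_sum,
    ← Finset.sum_add_distrib, ← mul_conj', map_sub]
  congr 1
  refine Finset.sum_congr rfl fun k _ ↦ ?_
  ring

/-- `𝒦[z̄'_i, z_j] = (1/π) δ_{ij} + z̄'_i z_j`: the composition of the kernel
operators `(z̄'_i 𝒫)` and `(z_j 𝒫)` has kernel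
`((1/π) δ_{ij} + z̄'_i z_j) 𝒫(Z,Z')`. -/
theorem K_zbar'_z (n : ℕ) (i j : Fin n) (z z' : Fin n → ℂ) :
    (∫ w : Fin n → ℂ,
        ((starRingEnd ℂ) (w i) * Pker n z w) * (w j * Pker n w z'))
      = ((1 / (Real.pi : ℂ)) * (if i = j then 1 else 0)
          + (starRingEnd ℂ) (z' i) * z j) * Pker n z z' := by
  calc _ = ∫ w : Fin n → ℂ,
        conj (w i) * w j * (∏ k, bergmanWeight (z k) (z' k) (w k)) * Pker n z z' := by
        congr with w
        rw [mul_mul_mul_comm, Pker_mul_Pker]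
        ring
    _ = _ := by
      rw [integral_mul_const, integral_mul_mul_prod_of_integral_eq_one
        (fun k ↦ integral_bergmanWeight (z k) (z' k)) conj (fun x ↦ x)]
      split_ifs with hij
      · subst hij
        rw [integral_conj_mul_self_mul_bergmanWeight]
        ring
      · rw [integral_conj_mul_bergmanWeight, integral_mul_bergmanWeight]
        ring
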